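/- Fix a positive integer m and let B = (b_1, ..., b_n) be a Ferrers board. Then for every real number x, Σ_{k=0}^{n} f_{k,m}(B) · x↓_{n-k,m} = Π_{i=1}^{n} (x + b_i - (i - 1)m), where f_{k,m}(B) is the k-th m-weighted file placement number of B. -/

import Mathlib

open scoped Classical

/-- The falling factorial `x↓ₖ = ∏_{i=0}^{k-1} (x - i)`. -/
noncomputable def ffall (x : ℝ) (k : ℕ) : ℝ := ∏ i ∈ Finset.range k, (x - i)

/-- The `m`-falling factorial `x↓_{k,m} = ∏_{i=0}^{k-1} (x - m·i)`. -/
noncomputable def mfall (x : ℝ) (m k : ℕ) : ℝ := ∏ i ∈ Finset.range k, (x - m * i)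

/-- The predicate that `b 0 ≤ b 1 ≤ ... ≤ b (n-1)`, i.e. the column heights of a
Ferrers board with `n` columns are weakly increasing.  (Column `i`, for `0 ≤ i < n`,
corresponds to column `i+1` = `b_{i+1}` of the paper.) -/
def FerrersMono (n : ℕ) (b : ℕ → ℕ) : Prop := ∀ i, i + 1 < n → b i ≤ b (i + 1)

/-- The cells of the Ferrers board with column heights `b 0, …, b (n-1)`:
pairs `(i, j)` with `i < n` (a column, 0-indexed) and `1 ≤ j ≤ b i` (a row, 1-indexed). -/
def cellFinset (n : ℕ) (b : ℕ → ℕ) : Finset (ℕ × ℕ) :=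
  (Finset.range n ×ˢ Finset.Icc 1 ((Finset.range n).sup b)).filter fun p => p.2 ≤ b p.1

/-- The file placements of `k` rooks on the board: `k` cells, no two in the same column. -/
def filePlacements (n : ℕ) (b : ℕ → ℕ) (k : ℕ) : Finset (Finset (ℕ × ℕ)) :=
  (cellFinset n b).powerset.filter fun P =>
    P.card = k ∧ ∀ p ∈ P, ∀ q ∈ P, p ≠ q → p.1 ≠ q.1

/-- The `k`-th rook number `r_k(B)`: the number of placements of `k` cells of the board,
no two in the same row or column. -/
def rookNum (n : ℕ) (b : ℕ → ℕ) (k : ℕ) : ℕ :=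
  ((cellFinset n b).powerset.filter fun P =>
    P.card = k ∧ ∀ p ∈ P, ∀ q ∈ P, p ≠ q → p.1 ≠ q.1 ∧ p.2 ≠ q.2).card

/-- The (0-indexed) level of the (1-indexed) row `j`: level `t` (0-indexed) consists of
rows `t*m + 1, …, t*m + m`. -/
def levelOf (m j : ℕ) : ℕ := (j - 1) / m

/-- The `k`-th `m`-level rook number `r_{k,m}(B)`: the number of placements of `k` cells
of the board, no two in the same column or in the same level. -/
def mLevelRookNum (m n : ℕ) (b : ℕ → ℕ) (k : ℕ) : ℕ :=
  ((cellFinset n b).powerset.filter fun P =>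
    P.card = k ∧ ∀ p ∈ P, ∀ q ∈ P, p ≠ q →
      p.1 ≠ q.1 ∧ levelOf m p.2 ≠ levelOf m q.2).card

/-- A placement has no two cells in the same level. -/
def NoLevelRepeat (m : ℕ) (F : Finset (ℕ × ℕ)) : Prop :=
  ∀ p ∈ F, ∀ q ∈ F, p ≠ q → levelOf m p.2 ≠ levelOf m q.2

/-- The `m`-weight of a file placement `F`: the product over all rows `j` of
`1↓_{f_j, m}` where `f_j` is the number of cells of `F` in row `j`.  (Rows containing
no cell of `F` contribute `1↓_{0,m} = 1`, so it suffices to take the product over the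
rows meeting `F`.) -/
noncomputable def wtm (m : ℕ) (F : Finset (ℕ × ℕ)) : ℝ :=
  ∏ j ∈ F.image Prod.snd, mfall 1 m ((F.filter fun p => p.2 = j).card)

/-- The `k`-th `m`-weighted file placement number `f_{k,m}(B)`. -/
noncomputable def fWeightNum (m n : ℕ) (b : ℕ → ℕ) (k : ℕ) : ℝ :=
  ∑ F ∈ filePlacements n b k, wtm m F

/-- The `m`-floor of `b`: the largest multiple of `m` that is at most `b`. -/
def mfloor (m b : ℕ) : ℕ := m * (b / m)

/-- A singleton board (w.r.t. `m`): a Ferrers board such that whenever column `i` has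
nonzero remainder mod `m`, the `m`-floor strictly increases at the next column. -/
def IsSingletonBoard (m n : ℕ) (b : ℕ → ℕ) : Prop :=
  FerrersMono n b ∧ ∀ i, i + 1 < n → b i - mfloor m (b i) ≠ 0 →
    mfloor m (b i) < mfloor m (b (i + 1))

/-- The cells of `F` lying in level `l` (0-indexed). -/
def rooksInLevel (m : ℕ) (F : Finset (ℕ × ℕ)) (l : ℕ) : Finset (ℕ × ℕ) :=
  F.filter fun p => levelOf m p.2 = l

/-- `l` is the distinguished level of `F`: it contains at least two cells of `F`,
it has the fewest cells among all levels containing at least two cells of `F`,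
and it is the lowest such level (any lower level with at least two cells of `F`
contains strictly more of them). -/
def DistinguishedLevel (m : ℕ) (F : Finset (ℕ × ℕ)) (l : ℕ) : Prop :=
  2 ≤ (rooksInLevel m F l).card ∧
  (∀ l', 2 ≤ (rooksInLevel m F l').card →
    (rooksInLevel m F l).card ≤ (rooksInLevel m F l').card) ∧
  (∀ l' < l, 2 ≤ (rooksInLevel m F l').card →
    (rooksInLevel m F l).card < (rooksInLevel m F l').card)

/-- The class `𝓟(F₀)` of a file placement `F₀` with distinguished level `l`:
all file placements on the board with the same number of rooks as `F₀` which agree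
with `F₀` outside level `l`, whose rooks in level `l` occupy the same columns as those
of `F₀`, and whose leftmost rook in level `l` occupies the same cell as the leftmost
rook of `F₀` in level `l`. -/
def classOf (m n : ℕ) (b : ℕ → ℕ) (l : ℕ) (F₀ : Finset (ℕ × ℕ)) :
    Finset (Finset (ℕ × ℕ)) :=
  (filePlacements n b F₀.card).filter fun F =>
    (F.filter fun p => levelOf m p.2 ≠ l) = (F₀.filter fun p => levelOf m p.2 ≠ l) ∧
    (rooksInLevel m F l).image Prod.fst = (rooksInLevel m F₀ l).image Prod.fst ∧
    ∀ p ∈ rooksInLevel m F l, (∀ q ∈ rooksInLevel m F l, p.1 ≤ q.1) → p ∈ F₀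

/-! Induction on the number of columns. A rook added in the new last column `n`, in row `r`,
multiplies the weight by `1 - m · #(earlier rooks in row r)`. Because `b i ≤ b n`, the `k`
earlier rooks all lie in the `b n` rows available, so summing over `r` gives the factor
`b n - m k`: `f_{k+1}(B + column) = f_{k+1}(B) + (b n - m k) f_k(B)`. Together with
`x↓_{n+1-k,m} = x↓_{n-k,m} (x - m (n - k))`, this recurrence is exactly multiplication of the
sum by `x + b n - n m`. -/

open Finset

lemma FerrersMono.monotoneOn {n : ℕ} {b : ℕ → ℕ} (hb : FerrersMono n b) :
    MonotoneOn b (Set.Iio n) :=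
  monotoneOn_of_le_add_one Set.ordConnected_Iio fun i _ _ hi => hb i hi

lemma mfall_succ (x : ℝ) (m k : ℕ) : mfall x m (k + 1) = mfall x m k * (x - m * k) :=
  prod_range_succ _ _

lemma mem_cellFinset {n : ℕ} {b : ℕ → ℕ} {p : ℕ × ℕ} :
    p ∈ cellFinset n b ↔ p.1 < n ∧ 1 ≤ p.2 ∧ p.2 ≤ b p.1 := by
  simp only [cellFinset, mem_filter, mem_product, mem_range, mem_Icc]
  exact ⟨fun ⟨⟨h1, h2, _⟩, h3⟩ => ⟨h1, h2, h3⟩,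
    fun ⟨h1, h2, h3⟩ => ⟨⟨h1, h2, h3.trans (le_sup (mem_range.2 h1))⟩, h3⟩⟩

lemma mem_filePlacements {n k : ℕ} {b : ℕ → ℕ} {F : Finset (ℕ × ℕ)} :
    F ∈ filePlacements n b k ↔
      F ⊆ cellFinset n b ∧ #F = k ∧ ∀ p ∈ F, ∀ q ∈ F, p ≠ q → p.1 ≠ q.1 := by
  simp only [filePlacements, mem_filter, mem_powerset]

lemma card_le_of_mem_filePlacements {n k : ℕ} {b : ℕ → ℕ} {F : Finset (ℕ × ℕ)}
    (hF : F ∈ filePlacements n b k) : k ≤ n := by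
  obtain ⟨hsub, rfl, hcol⟩ := mem_filePlacements.1 hF
  simpa using card_le_card_of_injOn Prod.fst (t := range n)
    (fun p hp => mem_range.2 (mem_cellFinset.1 (hsub hp)).1)
    (fun p hp q hq hpq => by_contra fun hne => hcol p hp q hq hne hpq)

lemma fWeightNum_zero (m n : ℕ) (b : ℕ → ℕ) : fWeightNum m n b 0 = 1 := by
  have hempty : filePlacements n b 0 = {∅} := by
    ext F
    simp only [mem_filePlacements, card_eq_zero, mem_singleton]
    exact ⟨fun h => h.2.1, by rintro rfl; simp⟩
  simp [fWeightNum, hempty, wtm]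

lemma fWeightNum_eq_zero_of_lt {m n k : ℕ} (b : ℕ → ℕ) (h : n < k) :
    fWeightNum m n b k = 0 := by
  rw [fWeightNum, sum_eq_zero]
  exact fun F hF => absurd (card_le_of_mem_filePlacements hF) (not_le.2 h)

lemma wtm_eq_prod_of_subset (m : ℕ) {F : Finset (ℕ × ℕ)} {S : Finset ℕ}
    (hS : F.image Prod.snd ⊆ S) : wtm m F = ∏ j ∈ S, mfall 1 m #{p ∈ F | p.2 = j} :=
  prod_subset hS fun j _ hj => by
    rw [card_eq_zero.2 (filter_eq_empty_iff.2 fun p hp hpj => hj (mem_image.2 ⟨p, hp, hpj⟩))]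
    rfl

lemma wtm_insert (m : ℕ) {F : Finset (ℕ × ℕ)} {c : ℕ × ℕ} (hc : c ∉ F) :
    wtm m (insert c F) = (1 - m * #{p ∈ F | p.2 = c.2}) * wtm m F := by
  have hS : F.image Prod.snd ⊆ insert c.2 (F.image Prod.snd) := subset_insert _ _
  have hS' : (insert c F).image Prod.snd ⊆ insert c.2 (F.image Prod.snd) := by
    rw [image_insert]
  have hrow : ∀ j ∈ (insert c.2 (F.image Prod.snd)).erase c.2,
      mfall 1 m #{p ∈ insert c F | p.2 = j} = mfall 1 m #{p ∈ F | p.2 = j} := fun j hj => by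
    rw [filter_insert, if_neg fun h => ne_of_mem_erase hj h.symm]
  rw [wtm_eq_prod_of_subset m hS', wtm_eq_prod_of_subset m hS,
    ← mul_prod_erase _ _ (mem_insert_self _ _), ← mul_prod_erase _ _ (mem_insert_self _ _),
    prod_congr rfl hrow, filter_insert, if_pos rfl,
    card_insert_of_notMem fun h => hc (mem_filter.1 h).1, mfall_succ]
  ring

lemma fst_lt_of_mem_filePlacements {n k : ℕ} {b : ℕ → ℕ} {F : Finset (ℕ × ℕ)} {p : ℕ × ℕ}
    (hF : F ∈ filePlacements n b k) (hp : p ∈ F) : p.1 < n :=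
  (mem_cellFinset.1 ((mem_filePlacements.1 hF).1 hp)).1

lemma mem_cellFinset_succ_iff {n : ℕ} {b : ℕ → ℕ} {p : ℕ × ℕ} (hp : p.1 ≠ n) :
    p ∈ cellFinset (n + 1) b ↔ p ∈ cellFinset n b := by
  simp only [mem_cellFinset]
  omega

lemma sum_wtm_insert_column (m : ℕ) {n k : ℕ} {b : ℕ → ℕ} (hbn : ∀ i < n, b i ≤ b n)
    {F : Finset (ℕ × ℕ)} (hF : F ∈ filePlacements n b k) :
    ∑ r ∈ Icc 1 (b n), wtm m (insert (n, r) F) = (b n - m * k) * wtm m F := by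
  obtain ⟨hsub, rfl, -⟩ := mem_filePlacements.1 hF
  have hrows : #F = ∑ r ∈ Icc 1 (b n), #{p ∈ F | p.2 = r} :=
    card_eq_sum_card_fiberwise fun p hp => by
      obtain ⟨h1, h2, h3⟩ := mem_cellFinset.1 (hsub hp)
      exact mem_Icc.2 ⟨h2, h3.trans (hbn _ h1)⟩
  have hnotMem : ∀ r, (n, r) ∉ F := fun r h => (fst_lt_of_mem_filePlacements hF h).false
  simp_rw [wtm_insert m (hnotMem _), ← sum_mul, sum_sub_distrib, ← mul_sum, sum_const,
    Nat.card_Icc, hrows]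
  push_cast
  simp

lemma filePlacements_succ_filter_forall_ne (n k : ℕ) (b : ℕ → ℕ) :
    {F ∈ filePlacements (n + 1) b k | ∀ p ∈ F, p.1 ≠ n} = filePlacements n b k := by
  ext F
  simp only [mem_filter, mem_filePlacements]
  constructor
  · rintro ⟨⟨hsub, hcard, hcol⟩, hn⟩
    exact ⟨fun p hp => (mem_cellFinset_succ_iff (hn p hp)).1 (hsub hp), hcard, hcol⟩
  · rintro ⟨hsub, hcard, hcol⟩
    have hlt : ∀ p ∈ F, p.1 < n := fun p hp => (mem_cellFinset.1 (hsub hp)).1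
    exact ⟨⟨fun p hp => (mem_cellFinset_succ_iff (hlt p hp).ne).2 (hsub hp), hcard, hcol⟩,
      fun p hp => (hlt p hp).ne⟩

lemma insert_mem_filePlacements_succ {n k r : ℕ} {b : ℕ → ℕ} {F : Finset (ℕ × ℕ)}
    (hF : F ∈ filePlacements n b k) (hr : r ∈ Icc 1 (b n)) :
    insert (n, r) F ∈ filePlacements (n + 1) b (k + 1) := by
  obtain ⟨hsub, hcard, hcol⟩ := mem_filePlacements.1 hF
  have hlt : ∀ p ∈ F, p.1 < n := fun p hp => fst_lt_of_mem_filePlacements hF hp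
  refine mem_filePlacements.2 ⟨insert_subset ?_ fun p hp => ?_, ?_, ?_⟩
  · exact mem_cellFinset.2 ⟨n.lt_succ_self, (mem_Icc.1 hr).1, (mem_Icc.1 hr).2⟩
  · exact (mem_cellFinset_succ_iff (hlt p hp).ne).2 (hsub hp)
  · rw [card_insert_of_notMem fun h => (hlt _ h).false, hcard]
  · simp only [mem_insert]
    rintro p (rfl | hp) q (rfl | hq) hpq
    · exact absurd rfl hpq
    · exact (hlt q hq).ne'
    · exact (hlt p hp).ne
    · exact hcol p hp q hq hpq

lemma erase_mem_filePlacements {n k : ℕ} {b : ℕ → ℕ} {F : Finset (ℕ × ℕ)} {c : ℕ × ℕ}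
    (hF : F ∈ filePlacements (n + 1) b (k + 1)) (hc : c ∈ F) (hcn : c.1 = n) :
    F.erase c ∈ filePlacements n b k := by
  obtain ⟨hsub, hcard, hcol⟩ := mem_filePlacements.1 hF
  have hne : ∀ p ∈ F.erase c, p.1 ≠ n := fun p hp hpn =>
    hcol p (mem_of_mem_erase hp) c hc (ne_of_mem_erase hp) (hpn.trans hcn.symm)
  refine mem_filePlacements.2 ⟨fun p hp => ?_, ?_, fun p hp q hq =>
    hcol p (mem_of_mem_erase hp) q (mem_of_mem_erase hq)⟩
  · exact (mem_cellFinset_succ_iff (hne p hp)).1 (hsub (mem_of_mem_erase hp))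
  · rw [card_erase_of_mem hc, hcard, Nat.add_sub_cancel]

lemma image_insert_column_filePlacements (n k : ℕ) (b : ℕ → ℕ) :
    (filePlacements n b k ×ˢ Icc 1 (b n)).image (fun q => insert (n, q.2) q.1) =
      {F ∈ filePlacements (n + 1) b (k + 1) | ¬ ∀ p ∈ F, p.1 ≠ n} := by
  ext F
  simp only [mem_image, mem_product, mem_filter, not_forall, not_not]
  constructor
  · rintro ⟨⟨F', r⟩, ⟨hF', hr⟩, rfl⟩
    exact ⟨insert_mem_filePlacements_succ hF' hr, (n, r), mem_insert_self _ _, rfl⟩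
  · rintro ⟨hF, c, hc, hcn⟩
    have hcF := (mem_filePlacements.1 hF).1 hc
    obtain ⟨-, hc1, hc2⟩ := mem_cellFinset.1 hcF
    refine ⟨(F.erase c, c.2), ⟨erase_mem_filePlacements hF hc hcn, mem_Icc.2 ⟨hc1, ?_⟩⟩, ?_⟩
    · rwa [hcn] at hc2
    · rw [← hcn, insert_erase hc]

lemma injOn_insert_column (n k : ℕ) (b : ℕ → ℕ) :
    Set.InjOn (fun q : Finset (ℕ × ℕ) × ℕ => insert (n, q.2) q.1)
      (filePlacements n b k ×ˢ Icc 1 (b n) : Finset _) := by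
  rintro ⟨F, r⟩ hq ⟨G, s⟩ hq' heq
  simp only [coe_product, Set.mem_prod, mem_coe] at hq hq' heq
  have hnF : ∀ t, (n, t) ∉ F := fun t h => (fst_lt_of_mem_filePlacements hq.1 h).false
  have hnG : ∀ t, (n, t) ∉ G := fun t h => (fst_lt_of_mem_filePlacements hq'.1 h).false
  have hrs : r = s := by
    have := heq ▸ mem_insert_self (n, r) F
    simpa [hnG] using this
  subst hrs
  rw [← erase_insert (hnF r), heq, erase_insert (hnG r)]

lemma fWeightNum_succ (m : ℕ) {n : ℕ} {b : ℕ → ℕ} (hbn : ∀ i < n, b i ≤ b n) (k : ℕ) :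
    fWeightNum m (n + 1) b (k + 1) =
      fWeightNum m n b (k + 1) + (b n - m * k) * fWeightNum m n b k := by
  rw [fWeightNum, ← sum_filter_add_sum_filter_not _ (fun F => ∀ p ∈ F, p.1 ≠ n),
    filePlacements_succ_filter_forall_ne, ← image_insert_column_filePlacements,
    sum_image (injOn_insert_column n k b), sum_product,
    sum_congr rfl fun F hF => sum_wtm_insert_column m hbn hF, ← mul_sum]
  rfl

lemma sum_mul_mfall_succ (x c : ℝ) (m n : ℕ) {f g : ℕ → ℝ} (hg₀ : g 0 = f 0)
    (hg : ∀ k, g (k + 1) = f (k + 1) + (c - m * k) * f k) (hf : f (n + 1) = 0) :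
    ∑ k ∈ range (n + 2), g k * mfall x m (n + 1 - k) =
      (∑ k ∈ range (n + 1), f k * mfall x m (n - k)) * (x + c - n * m) := by
  have hshift : ∑ k ∈ range (n + 2), f k * mfall x m (n + 1 - k) =
      ∑ k ∈ range (n + 1), f (k + 1) * mfall x m (n - k) + f 0 * mfall x m (n + 1) := by
    simp_rw [sum_range_succ' _ (n + 1), Nat.add_sub_add_right, Nat.sub_zero]
  rw [sum_range_succ', hg₀]
  simp_rw [hg, Nat.add_sub_add_right, Nat.sub_zero, add_mul, sum_add_distrib]
  rw [add_right_comm, ← hshift, sum_range_succ, hf, zero_mul, add_zero, ← sum_add_distrib,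
    sum_mul]
  refine sum_congr rfl fun k hk => ?_
  have hkn : k ≤ n := Nat.lt_succ_iff.1 (mem_range.1 hk)
  rw [Nat.sub_add_comm hkn, mfall_succ, Nat.cast_sub hkn]
  ring

theorem statement4_general (m : ℕ) (n : ℕ) (b : ℕ → ℕ)
    (hb : FerrersMono n b) (x : ℝ) :
    ∑ k ∈ Finset.range (n + 1), fWeightNum m n b k * mfall x m (n - k) =
      ∏ i ∈ Finset.range n, (x + (b i : ℝ) - (i : ℝ) * (m : ℝ)) := by
  induction n with
  | zero => simp [fWeightNum_zero, mfall]
  | succ n ih =>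
    have hbn : ∀ i < n, b i ≤ b n := fun i hi =>
      hb.monotoneOn (hi.trans n.lt_succ_self) n.lt_succ_self hi.le
    rw [prod_range_succ, ← ih fun i hi => hb i (by omega)]
    exact sum_mul_mfall_succ x (b n) m n (by rw [fWeightNum_zero, fWeightNum_zero])
      (fWeightNum_succ m hbn) (fWeightNum_eq_zero_of_lt b n.lt_succ_self)

/-- Barrese–Loehr–Remmel–Sagan.  For a Ferrers board `B = (b_1, …, b_n)`,
`Σ_{k=0}^n f_{k,m}(B) x↓_{n-k,m} = ∏_{i=1}^n (x + b_i - (i-1)m)`. -/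
theorem statement4 (m : ℕ) (hm : 0 < m) (n : ℕ) (b : ℕ → ℕ)
    (hb : FerrersMono n b) (x : ℝ) :
    ∑ k ∈ Finset.range (n + 1), fWeightNum m n b k * mfall x m (n - k) =
      ∏ i ∈ Finset.range n, (x + (b i : ℝ) - (i : ℝ) * (m : ℝ)) :=
  statement4_general m n b hb x
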